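/- Let H ≤ Sₙ be a transitive permutation group having the strict-EKR-property that contains an element fixing exactly one point of {1,…,n}. Then the wreath product S₂ ≀ H, acting on {1,2} × {1,…,n} by ((g₁,…,gₙ),h)·(a,i) = (g_i(a), h(i)), has the strict-EKR-property. -/

import Mathlib

/-! Translate a maximum intersecting set `I` of `S₂ ≀ H` so that it contains `1`, and read it
through the parametrization `(g, h) ↦ ((a, i) ↦ (gᵢ a, h i))`. Swapping every `gᵢ` (the antipode)
moves `I` to a disjoint set, and both lie over the projection `B` of `I` to `H`, which is
intersecting. Comparing `|I|` with a point stabilizer forces `|B| = |H_w|`, so `B = H_w` by the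
strict-EKR-property of `H`, and `I` together with its antipode is everything over `H_w`. An element
`T ∈ H_w` fixing only `w` then forces every element of `I` over `1` to fix the block `w`
pointwise, and from this every element of `I` fixes `(0, w)`. -/

/-! ### Basic definitions: derangement graphs, intersecting sets, EKR properties -/

/-- The derangement graph of a permutation group `G ≤ Sym(V)`: vertices are the elements
of `G`, and distinct `g`, `h` are adjacent iff `g * h⁻¹` is fixed-point-free on `V`. -/
def derGraph {V : Type*} (G : Subgroup (Equiv.Perm V)) : SimpleGraph G where
  Adj g h := g ≠ h ∧ ∀ v : V, ((g : Equiv.Perm V) * (h : Equiv.Perm V)⁻¹) v ≠ v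
  symm := ⟨by
    rintro g h ⟨hne, hd⟩
    refine ⟨hne.symm, fun v hv => hd v ?_⟩
    have h2 := congrArg (⇑(((h : Equiv.Perm V) * (g : Equiv.Perm V)⁻¹)⁻¹)) hv
    simpa [mul_inv_rev] using h2.symm⟩
  loopless := ⟨fun g hg => hg.1 rfl⟩

/-- A subset `I` of a permutation group `G ≤ Sym(V)` is intersecting if any two of its
elements agree on some point of `V`. -/
def IsIntersecting {V : Type*} (G : Subgroup (Equiv.Perm V)) (I : Set G) : Prop :=
  ∀ g ∈ I, ∀ h ∈ I, ∃ v : V, (g : Equiv.Perm V) v = (h : Equiv.Perm V) v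

/-- A permutation group `G ≤ Sym(V)` is transitive if it acts transitively on `V`. -/
def IsTransitive {V : Type*} (G : Subgroup (Equiv.Perm V)) : Prop :=
  ∀ v w : V, ∃ g ∈ G, g v = w

/-- A permutation group is regular if it is transitive and all point stabilizers are trivial. -/
def IsRegularGroup {V : Type*} (G : Subgroup (Equiv.Perm V)) : Prop :=
  IsTransitive G ∧ ∀ g ∈ G, ∀ v : V, g v = v → g = 1

/-- The stabilizer of a point `v`, as a subset of the permutation group `G`. -/
def stabSet {V : Type*} (G : Subgroup (Equiv.Perm V)) (v : V) : Set G :=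
  {g : G | (g : Equiv.Perm V) v = v}

/-- The intersection density `ρ(G)` of a (transitive) permutation group `G`: the maximum of
`|I| / |G_v|` over all intersecting sets `I` of `G`, where `G_v` is a point stabilizer. -/
noncomputable def interDensity {V : Type*} (G : Subgroup (Equiv.Perm V)) : ℝ :=
  sSup {x : ℝ | ∃ (I : Set G) (v : V), IsIntersecting G I ∧
    x = (Nat.card I : ℝ) / (Nat.card (stabSet G v) : ℝ)}

/-- A permutation group has the EKR-property if every intersecting set has size at most
the size of the largest point stabilizer. -/
def HasEKR {V : Type*} (G : Subgroup (Equiv.Perm V)) : Prop :=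
  ∀ I : Set G, IsIntersecting G I → Nat.card I ≤ ⨆ v : V, Nat.card (stabSet G v)

/-- A permutation group has the strict-EKR-property if every intersecting set of maximum
size is a coset of a point stabilizer. -/
def HasStrictEKR {V : Type*} (G : Subgroup (Equiv.Perm V)) : Prop :=
  ∀ I : Set G, IsIntersecting G I →
    (∀ J : Set G, IsIntersecting G J → Nat.card J ≤ Nat.card I) →
    ∃ (v : V) (a : G), I = (fun g => a * g) '' stabSet G v

/-! ### Graph products and related graph-theoretic notions -/

/-- The strong product of two simple graphs. -/
def strongProd {α β : Type*} (X : SimpleGraph α) (Y : SimpleGraph β) :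
    SimpleGraph (α × β) where
  Adj p q := (p.1 = q.1 ∧ Y.Adj p.2 q.2) ∨ (p.2 = q.2 ∧ X.Adj p.1 q.1) ∨
    (X.Adj p.1 q.1 ∧ Y.Adj p.2 q.2)
  symm := ⟨by
    rintro p q (⟨h1, h2⟩ | ⟨h1, h2⟩ | ⟨h1, h2⟩)
    · exact Or.inl ⟨h1.symm, h2.symm⟩
    · exact Or.inr (Or.inl ⟨h1.symm, h2.symm⟩)
    · exact Or.inr (Or.inr ⟨h1.symm, h2.symm⟩)⟩
  loopless := ⟨by
    rintro p (⟨_, h⟩ | ⟨_, h⟩ | ⟨h, _⟩)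
    · exact Y.loopless.irrefl _ h
    · exact X.loopless.irrefl _ h
    · exact X.loopless.irrefl _ h⟩

/-- The tensor (direct, categorical) product of two simple graphs. -/
def tensorProd {α β : Type*} (X : SimpleGraph α) (Y : SimpleGraph β) :
    SimpleGraph (α × β) where
  Adj p q := X.Adj p.1 q.1 ∧ Y.Adj p.2 q.2
  symm := ⟨fun _ _ ⟨h1, h2⟩ => ⟨h1.symm, h2.symm⟩⟩
  loopless := ⟨fun _ ⟨h1, _⟩ => X.loopless.irrefl _ h1⟩

/-- The tensor (direct) product of a family of simple graphs: two tuples are adjacent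
iff they are adjacent in every coordinate (for a nonempty index type this coincides with
the definition below, where distinctness is required to keep the graph loopless). -/
def tensorPi {ι : Type*} {α : ι → Type*} (X : ∀ i, SimpleGraph (α i)) :
    SimpleGraph (∀ i, α i) where
  Adj f g := f ≠ g ∧ ∀ i, (X i).Adj (f i) (g i)
  symm := ⟨fun _ _ ⟨hne, h⟩ => ⟨hne.symm, fun i => (h i).symm⟩⟩
  loopless := ⟨fun _ h => h.1 rfl⟩

/-- The disjoint union of `ι`-indexed copies of a simple graph `X`. -/
def copiesGraph (ι : Type*) {α : Type*} (X : SimpleGraph α) : SimpleGraph (ι × α) where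
  Adj p q := p.1 = q.1 ∧ X.Adj p.2 q.2
  symm := ⟨fun _ _ ⟨h1, h2⟩ => ⟨h1.symm, h2.symm⟩⟩
  loopless := ⟨fun _ h => X.loopless.irrefl _ h.2⟩

/-- The lexicographic product (wreath product) `X[Y]` of simple graphs. -/
def lexProd {α β : Type*} (X : SimpleGraph α) (Y : SimpleGraph β) :
    SimpleGraph (α × β) where
  Adj p q := X.Adj p.1 q.1 ∨ (p.1 = q.1 ∧ Y.Adj p.2 q.2)
  symm := ⟨by
    rintro p q (h | ⟨h1, h2⟩)
    · exact Or.inl h.symm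
    · exact Or.inr ⟨h1.symm, h2.symm⟩⟩
  loopless := ⟨by
    rintro p (h | ⟨_, h⟩)
    · exact X.loopless.irrefl _ h
    · exact Y.loopless.irrefl _ h⟩

/-- A simple graph is complete multipartite with `k` parts if its vertex set can be
partitioned into `k` (nonempty) parts so that two vertices are adjacent iff they lie in
different parts. -/
def IsCompleteMultipartiteWith {α : Type*} (X : SimpleGraph α) (k : ℕ) : Prop :=
  ∃ f : α → Fin k, Function.Surjective f ∧ ∀ a b : α, X.Adj a b ↔ f a ≠ f b

/-- An independent set (coclique) of a simple graph. -/
def IsIndep {α : Type*} (X : SimpleGraph α) (A : Set α) : Prop :=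
  ∀ a ∈ A, ∀ b ∈ A, ¬ X.Adj a b

/-- The independence number `α(X)` of a simple graph. -/
noncomputable def indepNum {α : Type*} (X : SimpleGraph α) : ℕ :=
  sSup {k : ℕ | ∃ A : Set α, IsIndep X A ∧ Nat.card A = k}

/-- The closed neighbourhood `N[A]` of a set `A` of vertices. -/
def closedNbhd {α : Type*} (X : SimpleGraph α) (A : Set α) : Set α :=
  {b | ∃ a ∈ A, a = b ∨ X.Adj a b}

/-- A graph `X` is IS-primitive if there is no non-maximum independent set `A` with
`|A| / |N[A]| = α(X) / |V(X)|`. -/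
def IsISPrimitive {α : Type*} (X : SimpleGraph α) : Prop :=
  ¬ ∃ A : Set α, IsIndep X A ∧ Nat.card A < indepNum X ∧
    (Nat.card A : ℚ) / (Nat.card (closedNbhd X A) : ℚ) =
      (indepNum X : ℚ) / (Nat.card α : ℚ)

/-- A simple graph is vertex-transitive if its automorphism group acts transitively on the
vertices. -/
def IsVertexTransitive {α : Type*} (X : SimpleGraph α) : Prop :=
  ∀ a b : α, ∃ e : X ≃g X, e a = b

/-! ### External and internal direct products of permutation groups -/

/-- The canonical monoid homomorphism `Sym(V) × Sym(W) → Sym(V × W)`. -/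
def permProdCongrHom (V W : Type*) : Equiv.Perm V × Equiv.Perm W →* Equiv.Perm (V × W) where
  toFun p := Equiv.prodCongr p.1 p.2
  map_one' := Equiv.ext fun _ => rfl
  map_mul' := fun _ _ => Equiv.ext fun _ => rfl

/-- The external direct product of permutation groups `G ≤ Sym(V)` and `H ≤ Sym(W)`,
acting on `V × W` by `(g,h)⬝(v,w) = (g v, h w)`. -/
def extProd {V W : Type*} (G : Subgroup (Equiv.Perm V)) (H : Subgroup (Equiv.Perm W)) :
    Subgroup (Equiv.Perm (V × W)) :=
  Subgroup.map (permProdCongrHom V W) (G.prod H)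

/-- The internal direct product of a family of permutation groups `G i ≤ Sym(V i)`,
acting componentwise on the disjoint union `Σ i, V i`. -/
def intProd {ι : Type*} {V : ι → Type*} (G : ∀ i, Subgroup (Equiv.Perm (V i))) :
    Subgroup (Equiv.Perm (Σ i, V i)) :=
  Subgroup.map (Equiv.Perm.sigmaCongrRightHom V) (Subgroup.pi Set.univ G)

/-! ### Wreath products of permutation groups -/

/-- The permutation of `V × {1,…,n}` associated to an element `((g₁,…,gₙ), h)` of the
wreath product: `(a, i) ↦ (gᵢ a, h i)`. -/
def wreathPerm {V : Type*} {n : ℕ} (g : Fin n → Equiv.Perm V) (h : Equiv.Perm (Fin n)) :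
    Equiv.Perm (V × Fin n) where
  toFun p := (g p.2 p.1, h p.2)
  invFun p := ((g (h⁻¹ p.2))⁻¹ p.1, h⁻¹ p.2)
  left_inv := by rintro ⟨a, i⟩; simp
  right_inv := by rintro ⟨b, j⟩; simp

/-- The wreath product `G ≀ H` of `G ≤ Sym(V)` by `H ≤ Sₙ`, as a permutation group
acting on `V × {1,…,n}`. -/
def wreathProd {V : Type*} {n : ℕ} (G : Subgroup (Equiv.Perm V))
    (H : Subgroup (Equiv.Perm (Fin n))) : Subgroup (Equiv.Perm (V × Fin n)) where
  carrier := {σ | ∃ (g : Fin n → Equiv.Perm V) (h : Equiv.Perm (Fin n)),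
    (∀ i, g i ∈ G) ∧ h ∈ H ∧ σ = wreathPerm g h}
  one_mem' := ⟨fun _ => 1, 1, fun _ => G.one_mem, H.one_mem, Equiv.ext fun _ => rfl⟩
  mul_mem' := by
    rintro σ τ ⟨g, h, hg, hh, rfl⟩ ⟨g', h', hg', hh', rfl⟩
    exact ⟨fun i => g (h' i) * g' i, h * h',
      fun i => G.mul_mem (hg _) (hg' _), H.mul_mem hh hh', Equiv.ext fun _ => rfl⟩
  inv_mem' := by
    rintro σ ⟨g, h, hg, hh, rfl⟩
    exact ⟨fun i => (g (h⁻¹ i))⁻¹, h⁻¹,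
      fun i => G.inv_mem (hg _), H.inv_mem hh, Equiv.ext fun _ => rfl⟩

theorem mem_wreathProd {V : Type*} {n : ℕ} {G : Subgroup (Equiv.Perm V)}
    {H : Subgroup (Equiv.Perm (Fin n))} {σ : Equiv.Perm (V × Fin n)} :
    σ ∈ wreathProd G H ↔ ∃ (g : Fin n → Equiv.Perm V) (h : Equiv.Perm (Fin n)),
      (∀ i, g i ∈ G) ∧ h ∈ H ∧ σ = wreathPerm g h := Iff.rfl

open Equiv

section PermGroup

variable {V : Type*} {G : Subgroup (Perm V)}

theorem stabSet_eq_stabilizer (v : V) : stabSet G v = MulAction.stabilizer G v := rfl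

theorem one_mem_stabSet (v : V) : (1 : G) ∈ stabSet G v := rfl

theorem isIntersecting_stabSet (v : V) : IsIntersecting G (stabSet G v) :=
  fun _ hg _ hh => ⟨v, hg.trans hh.symm⟩

theorem IsIntersecting.image_mul_left {I : Set G} (hI : IsIntersecting G I) (a : G) :
    IsIntersecting G ((a * ·) '' I) := by
  rintro - ⟨g, hg, rfl⟩ - ⟨h, hh, rfl⟩
  obtain ⟨v, hv⟩ := hI g hg h hh
  exact ⟨v, by simp [hv]⟩

theorem ncard_stabSet_eq (hG : IsTransitive G) (v w : V) :
    (stabSet G v).ncard = (stabSet G w).ncard := by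
  obtain ⟨g, hg, rfl⟩ := hG v w
  rw [stabSet_eq_stabilizer, stabSet_eq_stabilizer, ← Nat.card_coe_set_eq,
    ← Nat.card_coe_set_eq]
  exact Nat.card_congr (MulAction.stabilizerEquivStabilizer (g := (⟨g, hg⟩ : G)) rfl).toEquiv

theorem IsTransitive.exists_fixed_iff_eq (hG : IsTransitive G)
    (hfix : ∃ g ∈ G, ∃! v : V, g v = v) (w : V) : ∃ g ∈ G, ∀ v, g v = v ↔ v = w := by
  obtain ⟨g, hg, v, hv, hvuniq⟩ := hfix
  obtain ⟨t, ht, rfl⟩ := hG v w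
  refine ⟨t * g * t⁻¹, G.mul_mem (G.mul_mem ht hg) (G.inv_mem ht), fun u => ?_⟩
  rw [Perm.mul_apply, Perm.mul_apply, ← Perm.eq_inv_iff_eq, ← Perm.inv_eq_iff_eq (x := u)]
  exact ⟨hvuniq _, fun h => by rw [h, hv]⟩

theorem exists_isIntersecting_forall_ncard_le [Finite G] :
    ∃ I : Set G, IsIntersecting G I ∧ ∀ J : Set G, IsIntersecting G J → J.ncard ≤ I.ncard :=
  Set.exists_max_image {I : Set G | IsIntersecting G I} Set.ncard (Set.toFinite _)
    ⟨∅, by simp [IsIntersecting]⟩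

theorem HasStrictEKR.ncard_le [Finite G] (hS : HasStrictEKR G) (hT : IsTransitive G)
    {I : Set G} (hI : IsIntersecting G I) (v : V) : I.ncard ≤ (stabSet G v).ncard := by
  obtain ⟨K, hK, hKmax⟩ := exists_isIntersecting_forall_ncard_le (G := G)
  obtain ⟨w, a, rfl⟩ := hS K hK fun J hJ => by
    simpa only [Nat.card_coe_set_eq] using hKmax J hJ
  calc I.ncard ≤ _ := hKmax I hI
    _ = (stabSet G w).ncard := Set.ncard_image_of_injective _ (mul_right_injective a)
    _ = _ := ncard_stabSet_eq hT w v

theorem HasStrictEKR.eq_stabSet_of_one_mem [Finite G] (hS : HasStrictEKR G)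
    (hT : IsTransitive G) {I : Set G} (hI : IsIntersecting G I)
    (hmax : ∀ v, (stabSet G v).ncard ≤ I.ncard) (h1 : 1 ∈ I) : ∃ w, I = stabSet G w := by
  obtain ⟨v, -⟩ := hI 1 h1 1 h1
  obtain ⟨w, a, rfl⟩ := hS I hI fun J hJ => by
    simpa only [Nat.card_coe_set_eq] using (hS.ncard_le hT hJ v).trans (hmax v)
  obtain ⟨s, hs, hs1⟩ := h1
  have ha : a ∈ MulAction.stabilizer G w := by
    rw [eq_inv_of_mul_eq_one_left hs1]
    exact inv_mem hs
  exact ⟨w, leftCoset_mem_leftCoset _ ha⟩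

theorem hasStrictEKR_of_forall_one_mem [Finite G] (v : V)
    (h : ∀ I : Set G, IsIntersecting G I →
      (∀ J : Set G, IsIntersecting G J → J.ncard ≤ I.ncard) → 1 ∈ I → ∃ w, I = stabSet G w) :
    HasStrictEKR G := by
  intro I hI hImax
  simp only [Nat.card_coe_set_eq] at hImax
  obtain ⟨a, ha⟩ : I.Nonempty := by
    rw [← Set.ncard_pos]
    exact lt_of_lt_of_le ((Set.ncard_pos).2 ⟨1, one_mem_stabSet v⟩)
      (hImax _ (isIntersecting_stabSet v))
  obtain ⟨w, hw⟩ := h ((a⁻¹ * ·) '' I) (hI.image_mul_left _)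
    (fun J hJ => (Set.ncard_image_of_injective _ (mul_right_injective a⁻¹)).symm ▸ hImax J hJ)
    ⟨a, ha, inv_mul_cancel a⟩
  refine ⟨w, a, ?_⟩
  rw [← hw, Set.image_image]
  simp

end PermGroup

section Wreath

variable {V : Type*} {n : ℕ} {H : Subgroup (Perm (Fin n))}

theorem wreathPerm_inj [Nonempty V] {g g' : Fin n → Perm V} {h h' : Perm (Fin n)} :
    wreathPerm g h = wreathPerm g' h' ↔ g = g' ∧ h = h' := by
  refine ⟨fun he => ?_, fun ⟨hg, hh⟩ => hg ▸ hh ▸ rfl⟩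
  have happ (a : V) (i : Fin n) := Prod.ext_iff.1 (congrArg (· (a, i)) he)
  obtain ⟨a⟩ := ‹Nonempty V›
  exact ⟨funext fun i => Equiv.ext fun b => (happ b i).1, Equiv.ext fun i => (happ a i).2⟩

noncomputable def wreathEquiv [Nonempty V] :
    (Fin n → Perm V) × H ≃ wreathProd (⊤ : Subgroup (Perm V)) H :=
  Equiv.ofBijective (fun p => ⟨wreathPerm p.1 p.2, p.1, p.2, fun _ => trivial, p.2.2, rfl⟩)
    ⟨fun _ _ he =>
      have ⟨hg, hh⟩ := wreathPerm_inj.1 (congrArg Subtype.val he)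
      Prod.ext hg (Subtype.ext hh),
    fun ⟨_, g, h, _, hh, he⟩ => ⟨(g, ⟨h, hh⟩), Subtype.ext he.symm⟩⟩

theorem wreathEquiv_apply [Nonempty V] (p : (Fin n → Perm V) × H) (a : V) (i : Fin n) :
    (wreathEquiv p : Perm (V × Fin n)) (a, i) = (p.1 i a, (p.2 : Perm (Fin n)) i) := rfl

theorem wreathEquiv_one [Nonempty V] : wreathEquiv (1 : (Fin n → Perm V) × H) = 1 := rfl

end Wreath

section Antipode

variable {ι β : Type*}

theorem swap_mul_ne_self : ∀ x : Perm (Fin 2), swap 0 1 * x ≠ x := by decide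

theorem perm_fin_two_eq_one_or_eq_swap : ∀ x : Perm (Fin 2), x = 1 ∨ x = swap 0 1 := by decide

theorem perm_fin_two_eq_of_apply_eq : ∀ (x y : Perm (Fin 2)) (a : Fin 2), x a = y a → x = y := by
  decide

def antipode (p : (ι → Perm (Fin 2)) × β) : (ι → Perm (Fin 2)) × β :=
  (fun i => swap 0 1 * p.1 i, p.2)

theorem antipode_involutive : Function.Involutive (antipode (ι := ι) (β := β)) := fun p => by
  simp [antipode, swap_mul_self_mul]

theorem ncard_union_image_antipode [Finite ι] [Finite β] {J : Set ((ι → Perm (Fin 2)) × β)}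
    (hJ : ∀ p ∈ J, ∀ q ∈ J, ∃ i, p.1 i = q.1 i) :
    (J ∪ antipode '' J).ncard = 2 * J.ncard := by
  rw [Set.ncard_union_eq, Set.ncard_image_of_injective _ antipode_involutive.injective, two_mul]
  rw [Set.disjoint_right]
  rintro - ⟨p, hp, rfl⟩ hpJ
  obtain ⟨i, hi⟩ := hJ _ hpJ p hp
  exact swap_mul_ne_self _ hi

end Antipode

section TwoWreath

variable {n : ℕ} {H : Subgroup (Perm (Fin n))}

def IsWreathIntersecting (J : Set ((Fin n → Perm (Fin 2)) × H)) : Prop :=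
  ∀ p ∈ J, ∀ q ∈ J, ∃ i, p.1 i = q.1 i ∧ (p.2 : Perm (Fin n)) i = (q.2 : Perm (Fin n)) i

def wreathStab (H : Subgroup (Perm (Fin n))) (v : Fin n) : Set ((Fin n → Perm (Fin 2)) × H) :=
  {g | g v = 1} ×ˢ stabSet H v

theorem IsIntersecting.isWreathIntersecting_preimage
    {I : Set (wreathProd (⊤ : Subgroup (Perm (Fin 2))) H)} (hI : IsIntersecting _ I) :
    IsWreathIntersecting (wreathEquiv ⁻¹' I) := by
  intro p hp q hq
  obtain ⟨⟨a, i⟩, he⟩ := hI _ hp _ hq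
  rw [wreathEquiv_apply, wreathEquiv_apply, Prod.ext_iff] at he
  exact ⟨i, perm_fin_two_eq_of_apply_eq _ _ a he.1, he.2⟩

theorem preimage_wreathEquiv_stabSet (v : Fin n) :
    wreathEquiv ⁻¹' stabSet (wreathProd (⊤ : Subgroup (Perm (Fin 2))) H) (0, v) =
      wreathStab H v := by
  ext p
  simp only [Set.mem_preimage, stabSet, Set.mem_ofPred_eq, wreathEquiv_apply, Prod.ext_iff,
    wreathStab, Set.mem_prod]
  exact and_congr_left' ⟨perm_fin_two_eq_of_apply_eq _ 1 0, fun h => h ▸ rfl⟩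

theorem wreathStab_union_image_antipode (v : Fin n) :
    wreathStab H v ∪ antipode '' wreathStab H v = Set.univ ×ˢ stabSet H v := by
  ext p
  refine ⟨?_, fun ⟨_, hp⟩ => ?_⟩
  · rintro (⟨-, hp⟩ | ⟨p, ⟨-, hp⟩, rfl⟩)
    exacts [⟨trivial, hp⟩, ⟨trivial, hp⟩]
  · by_cases hg : p.1 v = 1
    · exact Or.inl ⟨hg, hp⟩
    · refine Or.inr ⟨antipode p, ⟨?_, hp⟩, antipode_involutive p⟩
      show swap 0 1 * p.1 v = 1
      rw [(perm_fin_two_eq_one_or_eq_swap _).resolve_left hg, swap_mul_self]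

theorem two_mul_ncard_wreathStab (v : Fin n) :
    2 * (wreathStab H v).ncard =
      Nat.card (Fin n → Perm (Fin 2)) * (stabSet H v).ncard := by
  rw [← ncard_union_image_antipode fun p hp q hq => ⟨v, hp.1.trans hq.1.symm⟩,
    wreathStab_union_image_antipode, Set.ncard_prod, Set.ncard_univ]

theorem IsWreathIntersecting.exists_union_image_antipode_eq (hT : IsTransitive H)
    (hS : HasStrictEKR H) {J : Set ((Fin n → Perm (Fin 2)) × H)} (hJ : IsWreathIntersecting J)
    (hmax : ∀ v, (wreathStab H v).ncard ≤ J.ncard) (h1 : 1 ∈ J) :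
    ∃ w, J ∪ antipode '' J = Set.univ ×ˢ stabSet H w := by
  have hsub : J ∪ antipode '' J ⊆ Set.univ ×ˢ (Prod.snd '' J) := by
    rintro _ (hp | ⟨p, hp, rfl⟩)
    exacts [⟨trivial, _, hp, rfl⟩, ⟨trivial, p, hp, rfl⟩]
  have hlow (v : Fin n) :
      Nat.card (Fin n → Perm (Fin 2)) * (stabSet H v).ncard ≤ (J ∪ antipode '' J).ncard := by
    rw [← two_mul_ncard_wreathStab, ncard_union_image_antipode fun p hp q hq => ?_]
    · exact Nat.mul_le_mul_left 2 (hmax v)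
    · obtain ⟨i, hi, -⟩ := hJ p hp q hq
      exact ⟨i, hi⟩
  have hB : IsIntersecting H (Prod.snd '' J) := by
    rintro - ⟨p, hp, rfl⟩ - ⟨q, hq, rfl⟩
    obtain ⟨i, -, hi⟩ := hJ p hp q hq
    exact ⟨i, hi⟩
  obtain ⟨w, hw⟩ := hS.eq_stabSet_of_one_mem hT hB (fun v => by
    have := (hlow v).trans (Set.ncard_le_ncard hsub)
    rw [Set.ncard_prod, Set.ncard_univ] at this
    exact Nat.le_of_mul_le_mul_left this Nat.card_pos) ⟨1, h1, rfl⟩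
  rw [hw] at hsub
  refine ⟨w, Set.eq_of_subset_of_ncard_le hsub ?_⟩
  rw [Set.ncard_prod, Set.ncard_univ]
  exact hlow w

theorem IsWreathIntersecting.subset_wreathStab {J : Set ((Fin n → Perm (Fin 2)) × H)}
    (hJ : IsWreathIntersecting J) (h1 : 1 ∈ J) {w : Fin n}
    (hw : J ∪ antipode '' J = Set.univ ×ˢ stabSet H w) {T : Perm (Fin n)} (hT : T ∈ H)
    (hTw : ∀ i, T i = i ↔ i = w) : J ⊆ wreathStab H w := by
  have hcover (x : Fin n → Perm (Fin 2)) (h : H) (hh : h ∈ stabSet H w) :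
      (x, h) ∈ J ∨ antipode (x, h) ∈ J := by
    obtain hx | ⟨q, hq, hqx⟩ : (x, h) ∈ J ∪ antipode '' J := hw ▸ ⟨trivial, hh⟩
    · exact Or.inl hx
    · exact Or.inr (hqx ▸ (antipode_involutive q).symm ▸ hq)
  obtain ⟨y, hy⟩ : ∃ y, (y, ⟨T, hT⟩) ∈ J := by
    rcases hcover 1 ⟨T, hT⟩ ((hTw w).2 rfl) with h | h
    exacts [⟨_, h⟩, ⟨_, h⟩]
  -- `T` fixes only `w`, so elements of `J` over `1` can meet `(y, T)` only in the block `w`.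
  have hfiber_one (x : Fin n → Perm (Fin 2)) (hx : (x, 1) ∈ J) : x w = 1 := by
    have hpin (x : Fin n → Perm (Fin 2)) (hx : (x, 1) ∈ J) : x w = y w := by
      obtain ⟨i, hxi, hi⟩ := hJ _ hx _ hy
      obtain rfl := (hTw i).1 hi.symm
      exact hxi
    exact (hpin x hx).trans (hpin 1 h1).symm
  rintro ⟨g, h⟩ hgh
  refine ⟨?_, (hw ▸ Or.inl hgh : (g, h) ∈ Set.univ ×ˢ stabSet H w).2⟩
  by_contra hg
  -- `x` differs from `g` in every block, so neither `(x, 1)` nor its antipode lies in `J`.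
  set x := Function.update (fun i => swap 0 1 * g i) w 1
  rcases hcover x 1 (one_mem_stabSet w) with hx | hx
  · obtain ⟨i, hi, -⟩ := hJ _ hgh _ hx
    by_cases hiw : i = w
    · subst hiw
      exact hg (by simpa [x] using hi)
    · exact swap_mul_ne_self (g i) (by simpa [x, hiw] using hi.symm)
  · exact swap_mul_ne_self 1 (by simpa [x, antipode] using hfiber_one _ hx)

theorem IsWreathIntersecting.eq_wreathStab (hT : IsTransitive H) (hS : HasStrictEKR H)
    (hfix : ∃ h ∈ H, ∃! i : Fin n, h i = i) {J : Set ((Fin n → Perm (Fin 2)) × H)}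
    (hJ : IsWreathIntersecting J) (hmax : ∀ v, (wreathStab H v).ncard ≤ J.ncard) (h1 : 1 ∈ J) :
    ∃ w, J = wreathStab H w := by
  obtain ⟨w, hw⟩ := hJ.exists_union_image_antipode_eq hT hS hmax h1
  obtain ⟨T, hTH, hTw⟩ := hT.exists_fixed_iff_eq hfix w
  exact ⟨w, Set.eq_of_subset_of_ncard_le (hJ.subset_wreathStab h1 hw hTH hTw) (hmax w)⟩

end TwoWreath

/-- If `H ≤ Sₙ` is transitive, has the strict-EKR-property and contains
an element fixing exactly one point, then `S₂ ≀ H` has the strict-EKR-property. -/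
theorem S2_wr_H_hasStrictEKR {n : ℕ} (H : Subgroup (Equiv.Perm (Fin n)))
    (hH : IsTransitive H) (hstrict : HasStrictEKR H)
    (hfix : ∃ h ∈ H, ∃! i : Fin n, h i = i) :
    HasStrictEKR (wreathProd (⊤ : Subgroup (Equiv.Perm (Fin 2))) H) := by
  have ⟨_, _, i₀, _⟩ := hfix
  refine hasStrictEKR_of_forall_one_mem ((0 : Fin 2), i₀) fun I hI hImax h1 => ?_
  have hcard (K : Set (wreathProd (⊤ : Subgroup (Perm (Fin 2))) H)) :
      (wreathEquiv ⁻¹' K).ncard = K.ncard :=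
    Set.ncard_preimage_of_injective_subset_range wreathEquiv.injective (by simp)
  obtain ⟨w, hw⟩ := hI.isWreathIntersecting_preimage.eq_wreathStab hH hstrict hfix
    (fun v => by
      rw [← preimage_wreathEquiv_stabSet, hcard, hcard]
      exact hImax _ (isIntersecting_stabSet _))
    (by rwa [Set.mem_preimage, wreathEquiv_one])
  rw [← preimage_wreathEquiv_stabSet] at hw
  exact ⟨(0, w), Set.preimage_injective.2 wreathEquiv.surjective hw⟩
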